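/- Let A, B, C be sets of solution mappings and S_A, S_B, S_C ⊆ V be such that every mapping in A has support S_A, every mapping in B has support S_B, every mapping in C has support S_C, and S_A ∩ S_C ⊆ S_B (a path-shaped acyclic join query A–B–C). Define B₁ = B ⋉ C, A₁ = A ⋉ B₁, B₂ = B₁ ⋉ A₁, and C₁ = C ⋉ B₂ (a bottom-up pass of semi-joins followed by a top-down pass along the path). Then every μ ∈ A₁ ∪ B₂ ∪ C₁ satisfies μ ⊑ ρ for some ρ ∈ (A ⋈ B) ⋈ C; that is, after the two semi-join passes each operand is left with minimal mappings: every remaining mapping participates in some final join result. -/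

import Mathlib

/-- Two solution mappings are compatible if they agree wherever both are bound. -/
def Compatible {V D : Type*} (μ₁ μ₂ : V → Option D) : Prop :=
  ∀ v, μ₁ v = none ∨ μ₂ v = none ∨ μ₁ v = μ₂ v

/-- Merge of two solution mappings: the left binding takes precedence. -/
def mergeMap {V D : Type*} (μ₁ μ₂ : V → Option D) : V → Option D :=
  fun v => (μ₁ v).orElse (fun _ => μ₂ v)

/-- SPARQL inner join of two sets of solution mappings. -/
def joinSet {V D : Type*} (A B : Set (V → Option D)) : Set (V → Option D) :=
  {μ | ∃ μ₁ ∈ A, ∃ μ₂ ∈ B, Compatible μ₁ μ₂ ∧ μ = mergeMap μ₁ μ₂}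

/-- SPARQL difference: mappings in A with no compatible partner in B. -/
def diffSet {V D : Type*} (A B : Set (V → Option D)) : Set (V → Option D) :=
  {μ₁ ∈ A | ∀ μ₂ ∈ B, ¬ Compatible μ₁ μ₂}

/-- SPARQL left outer join (OPTIONAL). -/
def leftJoinSet {V D : Type*} (A B : Set (V → Option D)) : Set (V → Option D) :=
  joinSet A B ∪ diffSet A B

/-- Semi-join: mappings in A having some compatible partner in B. -/
def semiJoin {V D : Type*} (A B : Set (V → Option D)) : Set (V → Option D) :=
  {μ₁ ∈ A | ∃ μ₂ ∈ B, Compatible μ₁ μ₂}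

/-- Subsumption order: μ₂ binds everything μ₁ binds, to the same value. -/
def Subsumes {V D : Type*} (μ₁ μ₂ : V → Option D) : Prop :=
  ∀ v, μ₁ v ≠ none → μ₂ v = μ₁ v

/-- best-match: the subsumption-maximal elements of X. -/
def bestMatch {V D : Type*} (X : Set (V → Option D)) : Set (V → Option D) :=
  {μ ∈ X | ∀ μ' ∈ X, Subsumes μ μ' → μ' = μ}

/-! The semi-join passes leave every surviving mapping on a chain `a – b – c` of compatible
mappings from `A`, `B`, `C`. Because every variable shared by `a` and `c` is bound in `b`,
`a ⊔ b` is still compatible with `c`, and `(a ⊔ b) ⊔ c` is a join result extending all three. -/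

section

variable {V D : Type*}

theorem mergeMap_apply_of_ne_none {a b : V → Option D} {v : V} (h : a v ≠ none) :
    mergeMap a b v = a v := by
  obtain ⟨x, hx⟩ := Option.ne_none_iff_exists'.mp h
  simp [mergeMap, hx]

theorem mergeMap_apply_of_eq_none {a b : V → Option D} {v : V} (h : a v = none) :
    mergeMap a b v = b v := by
  simp [mergeMap, h]

theorem Compatible.symm {a b : V → Option D} (h : Compatible a b) : Compatible b a := fun v => by
  obtain h | h | h := h v
  exacts [Or.inr (Or.inl h), Or.inl h, Or.inr (Or.inr h.symm)]

theorem Subsumes.trans {a b c : V → Option D} (hab : Subsumes a b) (hbc : Subsumes b c) :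
    Subsumes a c := fun v hv => by
  rw [hbc v (by rwa [hab v hv]), hab v hv]

theorem subsumes_mergeMap_left (a b : V → Option D) : Subsumes a (mergeMap a b) :=
  fun _ => mergeMap_apply_of_ne_none

theorem Compatible.subsumes_mergeMap_right {a b : V → Option D} (h : Compatible a b) :
    Subsumes b (mergeMap a b) := fun v hbv => by
  obtain hav | hbv' | heq := h v
  · exact mergeMap_apply_of_eq_none hav
  · exact absurd hbv' hbv
  · rw [mergeMap_apply_of_ne_none (heq ▸ hbv), heq]

theorem Compatible.mergeMap_left {a b c : V → Option D} (hab : Compatible a b)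
    (hbc : Compatible b c) (hsep : ∀ v, a v ≠ none → c v ≠ none → b v ≠ none) :
    Compatible (mergeMap a b) c := fun v => by
  by_cases hav : a v = none
  · rw [mergeMap_apply_of_eq_none hav]
    exact hbc v
  by_cases hcv : c v = none
  · exact Or.inr (Or.inl hcv)
  have hbv := hsep v hav hcv
  have hab_v : a v = b v := ((hab v).resolve_left hav).resolve_left hbv
  have hbc_v : b v = c v := ((hbc v).resolve_left hbv).resolve_left hcv
  rw [mergeMap_apply_of_ne_none hav]
  exact Or.inr (Or.inr (hab_v.trans hbc_v))

theorem exists_mem_joinSet_joinSet_subsumes {A B C : Set (V → Option D)} {SA SB SC : Set V}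
    (hA : ∀ μ ∈ A, {v | μ v ≠ none} = SA)
    (hB : ∀ μ ∈ B, {v | μ v ≠ none} = SB)
    (hC : ∀ μ ∈ C, {v | μ v ≠ none} = SC)
    (hpath : SA ∩ SC ⊆ SB)
    {a b c : V → Option D} (ha : a ∈ A) (hb : b ∈ B) (hc : c ∈ C)
    (hab : Compatible a b) (hbc : Compatible b c) :
    ∃ ρ ∈ joinSet (joinSet A B) C, Subsumes a ρ ∧ Subsumes b ρ ∧ Subsumes c ρ := by
  have hsep : ∀ v, a v ≠ none → c v ≠ none → b v ≠ none := by
    intro v hav hcv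
    have hv : v ∈ SB := hpath ⟨hA a ha ▸ hav, hC c hc ▸ hcv⟩
    rwa [← hB b hb] at hv
  have habc := hab.mergeMap_left hbc hsep
  refine ⟨mergeMap (mergeMap a b) c, ⟨mergeMap a b, ⟨a, ha, b, hb, hab, rfl⟩, c, hc, habc, rfl⟩,
    ?_, ?_, habc.subsumes_mergeMap_right⟩
  · exact (subsumes_mergeMap_left a b).trans (subsumes_mergeMap_left _ c)
  · exact hab.subsumes_mergeMap_right.trans (subsumes_mergeMap_left _ c)

end

theorem full_reducer_minimal (V D : Type*)
    (A B C : Set (V → Option D)) (SA SB SC : Set V)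
    (hA : ∀ μ ∈ A, {v | μ v ≠ none} = SA)
    (hB : ∀ μ ∈ B, {v | μ v ≠ none} = SB)
    (hC : ∀ μ ∈ C, {v | μ v ≠ none} = SC)
    (hpath : SA ∩ SC ⊆ SB)
    (B₁ A₁ B₂ C₁ : Set (V → Option D))
    (hB₁ : B₁ = semiJoin B C) (hA₁ : A₁ = semiJoin A B₁)
    (hB₂ : B₂ = semiJoin B₁ A₁) (hC₁ : C₁ = semiJoin C B₂) :
    ∀ μ ∈ A₁ ∪ B₂ ∪ C₁, ∃ ρ ∈ joinSet (joinSet A B) C, Subsumes μ ρ := by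
  subst hB₁ hA₁ hB₂ hC₁
  rintro μ ((⟨ha, b, ⟨hb, c, hc, hbc⟩, hab⟩ | ⟨⟨hb, c, hc, hbc⟩, a, ⟨ha, -⟩, hba⟩) |
    ⟨hc, b, ⟨⟨hb, -⟩, a, ⟨ha, -⟩, hba⟩, hcb⟩)
  · obtain ⟨ρ, hρ, hμρ, -, -⟩ :=
      exists_mem_joinSet_joinSet_subsumes hA hB hC hpath ha hb hc hab hbc
    exact ⟨ρ, hρ, hμρ⟩
  · obtain ⟨ρ, hρ, -, hμρ, -⟩ :=
      exists_mem_joinSet_joinSet_subsumes hA hB hC hpath ha hb hc hba.symm hbc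
    exact ⟨ρ, hρ, hμρ⟩
  · obtain ⟨ρ, hρ, -, -, hμρ⟩ :=
      exists_mem_joinSet_joinSet_subsumes hA hB hC hpath ha hb hc hba.symm hcb.symm
    exact ⟨ρ, hρ, hμρ⟩
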